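/- arXiv:2307.08857 — 13 statements merged into one kernel-verified Lean document; each statement's English description precedes it below -/
import Mathlib

section
/- Let S and S' be two canonical shifting solutions (for subtensor dimension k = d − 1) for (A, Ω). Then the canonically shifted tensors they determine agree on all known entries; equivalently, ∑_{j : Fin d} S j (α j) = ∑_{j : Fin d} S' j (α j) for every α ∈ Ω. -/
open Finset

/-- `S` is a canonical shifting solution (subtensor dimension `k = d - 1`) for `(A, Ω)`:
for every dimension `j` and coordinate `v` whose known slice is nonempty, the sum of the
shifted tensor `A'(α) = A(α) - ∑ j', S j' (α j')` over that slice is zero. -/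
def IsCSS {d : ℕ} {n : Fin d → ℕ} (A : (∀ j, Fin (n j)) → ℝ)
    (Ω : Finset (∀ j, Fin (n j))) (S : ∀ j, Fin (n j) → ℝ) : Prop :=
  ∀ (j : Fin d) (v : Fin (n j)),
    (Ω.filter (fun α => α j = v)).Nonempty →
    ∑ α ∈ Ω.filter (fun α => α j = v), (A α - ∑ j', S j' (α j')) = 0

/-- `α` (an unknown entry) is fully supported w.r.t. `Ω`: there is `β` differing from `α`
in every coordinate such that every mixed vertex of the hypercube spanned by `α` and `β`,
other than `α` itself, is a known entry. -/
def FullySupported {d : ℕ} {n : Fin d → ℕ} (Ω : Finset (∀ j, Fin (n j)))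
    (α : ∀ j, Fin (n j)) : Prop :=
  ∃ β : ∀ j, Fin (n j), (∀ j, β j ≠ α j) ∧
    ∀ α' : ∀ j, Fin (n j), (∀ j, α' j = α j ∨ α' j = β j) → α' ≠ α → α' ∈ Ω

/-- Any two canonical shifting solutions determine the same canonically shifted tensor on
known entries; equivalently, their per-entry shift totals agree on every `α ∈ Ω`. -/
theorem css_unique_on_known {d : ℕ} (hd : 1 ≤ d) {n : Fin d → ℕ} (hn : ∀ j, 0 < n j)
    (A : (∀ j, Fin (n j)) → ℝ) (Ω : Finset (∀ j, Fin (n j)))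
    (S S' : ∀ j, Fin (n j) → ℝ) (hS : IsCSS A Ω S) (hS' : IsCSS A Ω S') :
    ∀ α ∈ Ω, ∑ j, S j (α j) = ∑ j, S' j (α j) := by
  classical
  set T : ∀ j, Fin (n j) → ℝ := fun j v => S j v - S' j v with hT
  have hslice : ∀ (j : Fin d) (v : Fin (n j)),
      ∑ β ∈ Ω.filter (fun β => β j = v), (∑ j', T j' (β j')) = 0 := by
    intro j v
    rcases (Ω.filter (fun β => β j = v)).eq_empty_or_nonempty with h | h
    · simp [h]
    · have h1 := hS j v h
      have h2 := hS' j v h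
      have key : ∑ β ∈ Ω.filter (fun β => β j = v),
          ((A β - ∑ j', S' j' (β j')) - (A β - ∑ j', S j' (β j'))) = 0 := by
        rw [Finset.sum_sub_distrib, h1, h2]; ring
      have heq : ∀ β : ∀ j, Fin (n j),
          (A β - ∑ j', S' j' (β j')) - (A β - ∑ j', S j' (β j'))
            = ∑ j', T j' (β j') := by
        intro β
        rw [hT, Finset.sum_sub_distrib]
        ring
      rw [← key]
      exact Finset.sum_congr rfl fun β _ => (heq β).symm
  have hsq : ∑ β ∈ Ω, (∑ j, T j (β j)) ^ 2 = 0 := by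
    calc ∑ β ∈ Ω, (∑ j, T j (β j)) ^ 2
        = ∑ β ∈ Ω, ∑ j, (∑ j', T j' (β j')) * T j (β j) := by
          refine Finset.sum_congr rfl fun β _ => ?_
          rw [sq, Finset.mul_sum]
      _ = ∑ j, ∑ β ∈ Ω, (∑ j', T j' (β j')) * T j (β j) := Finset.sum_comm
      _ = ∑ j, ∑ v : Fin (n j), ∑ β ∈ Ω.filter (fun β => β j = v),
            (∑ j', T j' (β j')) * T j (β j) := by
          refine Finset.sum_congr rfl fun j _ => ?_
          exact (Finset.sum_fiberwise Ω (fun β => β j)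
            (fun β => (∑ j', T j' (β j')) * T j (β j))).symm
      _ = 0 := by
          refine Finset.sum_eq_zero fun j _ => Finset.sum_eq_zero fun v _ => ?_
          have hmul : ∑ β ∈ Ω.filter (fun β => β j = v),
              (∑ j', T j' (β j')) * T j (β j)
            = (∑ β ∈ Ω.filter (fun β => β j = v), (∑ j', T j' (β j'))) * T j v := by
            rw [Finset.sum_mul]
            refine Finset.sum_congr rfl fun β hβ => ?_
            rw [(Finset.mem_filter.mp hβ).2]
          rw [hmul, hslice j v, zero_mul]
  intro α hα
  have hz : (∑ j, T j (α j)) ^ 2 = 0 :=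
    (Finset.sum_eq_zero_iff_of_nonneg (fun β _ => sq_nonneg _)).mp hsq α hα
  have h0 : ∑ j, T j (α j) = 0 := pow_eq_zero_iff (by norm_num) |>.mp hz
  rw [hT, Finset.sum_sub_distrib] at h0
  linarith
end

section
/- Let T be any family with T j : Fin (n j) → ℝ and define the shifted tensor A_T by A_T(α) = A(α) + ∑_{j : Fin d} T j (α j). If S is a canonical shifting solution (for subtensor dimension k = d − 1) for (A, Ω), then the family S + T (defined by (S + T) j v = S j v + T j v) is a canonical shifting solution for (A_T, Ω), and the imputed value it determines at each α ∉ Ω equals the imputed value determined by S for (A, Ω) plus ∑_{j : Fin d} T j (α j). (Shift consistency: SCCA(T ⊖ A, d−1) = T ⊖ SCCA(A, d−1).) -/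
open Finset

theorem isCSS_shift_iff {d : ℕ} {n : Fin d → ℕ} (A : (∀ j, Fin (n j)) → ℝ)
    (Ω : Finset (∀ j, Fin (n j))) (S T : ∀ j, Fin (n j) → ℝ) :
    IsCSS (fun α => A α + ∑ j, T j (α j)) Ω (fun j v => S j v + T j v) ↔ IsCSS A Ω S := by
  have residual_eq : ∀ α : ∀ j, Fin (n j),
      (A α + ∑ j, T j (α j)) - ∑ j, (S j (α j) + T j (α j)) = A α - ∑ j, S j (α j) := by
    intro α
    rw [sum_add_distrib]
    ring
  simp only [IsCSS, residual_eq]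

theorem scca_shift_consistent_general {d : ℕ} {n : Fin d → ℕ}
    (A : (∀ j, Fin (n j)) → ℝ) (Ω : Finset (∀ j, Fin (n j)))
    (S T : ∀ j, Fin (n j) → ℝ) (hS : IsCSS A Ω S) :
    IsCSS (fun α => A α + ∑ j, T j (α j)) Ω (fun j v => S j v + T j v) ∧
      ∀ α, α ∉ Ω →
        ∑ j, (S j (α j) + T j (α j)) = (∑ j, S j (α j)) + ∑ j, T j (α j) :=
  ⟨(isCSS_shift_iff A Ω S T).2 hS, fun _ _ => sum_add_distrib⟩

/-- Shift consistency of SCCA: if `S` solves the canonical shifting problem for `(A, Ω)`,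
then `S + T` solves it for the shifted tensor `A_T(α) = A(α) + ∑ j, T j (α j)`, and the
imputed value of `S + T` at each unknown entry is the imputed value of `S` plus the shift. -/
theorem scca_shift_consistent {d : ℕ} (hd : 1 ≤ d) {n : Fin d → ℕ} (hn : ∀ j, 0 < n j)
    (A : (∀ j, Fin (n j)) → ℝ) (Ω : Finset (∀ j, Fin (n j)))
    (S T : ∀ j, Fin (n j) → ℝ) (hS : IsCSS A Ω S) :
    IsCSS (fun α => A α + ∑ j, T j (α j)) Ω (fun j v => S j v + T j v) ∧
      ∀ α, α ∉ Ω →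
        ∑ j, (S j (α j) + T j (α j)) = (∑ j, S j (α j)) + ∑ j, T j (α j) :=
  scca_shift_consistent_general A Ω S T hS
end

section
/- Let T be any family with T j : Fin (n j) → ℝ and define A_T by A_T(α) = A(α) + ∑_{j : Fin d} T j (α j). If S is any canonical shifting solution (for subtensor dimension k = d − 1) for (A, Ω) and S̃ is any canonical shifting solution for (A_T, Ω), then the two canonically shifted tensors agree on known entries: A_T(α) − ∑_{j : Fin d} S̃ j (α j) = A(α) − ∑_{j : Fin d} S j (α j) for every α ∈ Ω. (The canonical shifted form is invariant under shifting: CSA(T ⊖ A, k) = CSA(A, k).) -/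
open Finset

/-- The canonical shifted form is invariant under shifting: for any shift family `T`,
a canonical shifting solution `S` for `(A, Ω)` and a canonical shifting solution `S̃` for
the shifted tensor `A_T` determine the same canonically shifted tensor on known entries. -/
theorem csa_shift_invariant {d : ℕ} (hd : 1 ≤ d) {n : Fin d → ℕ} (hn : ∀ j, 0 < n j)
    (A : (∀ j, Fin (n j)) → ℝ) (Ω : Finset (∀ j, Fin (n j)))
    (T S St : ∀ j, Fin (n j) → ℝ)
    (hS : IsCSS A Ω S)
    (hSt : IsCSS (fun α => A α + ∑ j, T j (α j)) Ω St) :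
    ∀ α ∈ Ω,
      (A α + ∑ j, T j (α j)) - ∑ j, St j (α j) = A α - ∑ j, S j (α j) := by
  -- difference of the two shifted tensors
  set δ : ∀ j, Fin (n j) → ℝ := fun j v => T j v + S j v - St j v with hδ
  set D : (∀ j, Fin (n j)) → ℝ := fun α => ∑ j, δ j (α j) with hD
  have hDval : ∀ α, D α = ((A α + ∑ j, T j (α j)) - ∑ j, St j (α j)) -
      (A α - ∑ j, S j (α j)) := by
    intro α
    simp only [hD, hδ]
    rw [Finset.sum_sub_distrib, Finset.sum_add_distrib]
    ring
  -- slice sums of D vanish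
  have hslice : ∀ (j : Fin d) (v : Fin (n j)),
      ∑ α ∈ Ω.filter (fun α => α j = v), D α = 0 := by
    intro j v
    rcases Finset.eq_empty_or_nonempty (Ω.filter (fun α => α j = v)) with h | h
    · simp [h]
    · have h1 := hS j v h
      have h2 := hSt j v h
      calc ∑ α ∈ Ω.filter (fun α => α j = v), D α
          = (∑ α ∈ Ω.filter (fun α => α j = v),
              ((A α + ∑ j', T j' (α j')) - ∑ j', St j' (α j'))) -
            ∑ α ∈ Ω.filter (fun α => α j = v), (A α - ∑ j', S j' (α j')) := by
            rw [← Finset.sum_sub_distrib]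
            exact Finset.sum_congr rfl fun α _ => hDval α
        _ = 0 := by rw [h1, h2]; ring
  -- sum of squares of D over Ω is zero
  have hsq : ∑ α ∈ Ω, D α ^ 2 = 0 := by
    calc ∑ α ∈ Ω, D α ^ 2 = ∑ α ∈ Ω, ∑ j, D α * δ j (α j) := by
          refine Finset.sum_congr rfl fun α _ => ?_
          rw [← Finset.mul_sum, sq]
      _ = ∑ j, ∑ α ∈ Ω, D α * δ j (α j) := Finset.sum_comm
      _ = ∑ j : Fin d, ∑ v : Fin (n j),
            ∑ α ∈ Ω.filter (fun α => α j = v), D α * δ j (α j) := by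
          refine Finset.sum_congr rfl fun j _ => ?_
          exact (Finset.sum_fiberwise Ω (fun α => α j) (fun α => D α * δ j (α j))).symm
      _ = 0 := by
          refine Finset.sum_eq_zero fun j _ => Finset.sum_eq_zero fun v _ => ?_
          have : ∑ α ∈ Ω.filter (fun α => α j = v), D α * δ j (α j)
              = (∑ α ∈ Ω.filter (fun α => α j = v), D α) * δ j v := by
            rw [Finset.sum_mul]
            refine Finset.sum_congr rfl fun α hα => ?_
            rw [(Finset.mem_filter.mp hα).2]
          rw [this, hslice, zero_mul]
  intro α hα
  have hD0 : D α = 0 := by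
    have := (Finset.sum_eq_zero_iff_of_nonneg
      (fun β _ => sq_nonneg (D β))).mp hsq α hα
    exact pow_eq_zero_iff (by norm_num) |>.mp this
  have := hDval α
  linarith [this, hD0]
end

section
/- Consensus ordering: let d ≥ 2, let D ≥ 1, let γ : Fin D → Fin (n (d−1)) be injective (a selection of D slices in the last dimension), and suppose there is a nonempty set K of index vectors over the first d − 1 dimensions such that for every a : Fin D the known positions in slice γ a are exactly K (i.e., for every β over the first d − 1 coordinates, (β, γ a) ∈ Ω ↔ β ∈ K), and for all β ∈ K and all a < b, A(β, γ a) < A(β, γ b). Then for every canonical shifting solution S (for subtensor dimension k = d − 1) for (A, Ω) and every index vector β over the first d − 1 dimensions with (β, γ a) ∉ Ω for all a, the imputed values are strictly increasing: for a < b, ∑_{j < d−1} S j (β j) + S (d−1) (γ a) < ∑_{j < d−1} S j (β j) + S (d−1) (γ b). -/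
/-!
Along the slice `v` of the last dimension the shift `∑ j, S j (α j)` splits into the shift of
the first `d` coordinates plus `S (last d) v`. If the known entries of that slice are
`snoc β v` for `β` in a nonempty set `K`, the canonical-shifting equation for `v` therefore
makes `#K * S (last d) v` the sum over `K` of `A (snoc β v)` minus the first-`d` shift of `β`.
Slices sharing `K` and ordered entrywise on `K` thus have ordered last-coordinate shifts, and
the imputed values at a common `β` differ only in that term.
-/

open Finset

section SnocSlice

variable {d : ℕ} {n : Fin (d + 1) → ℕ}

lemma sum_apply_snoc {M : Type*} [AddCommMonoid M] (S : ∀ j, Fin (n j) → M)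
    (β : ∀ j : Fin d, Fin (n j.castSucc)) (v : Fin (n (Fin.last d))) :
    ∑ j, S j ((Fin.snoc β v : ∀ j, Fin (n j)) j) =
      ∑ j : Fin d, S j.castSucc (β j) + S (Fin.last d) v := by
  simp [Fin.sum_univ_castSucc]

lemma filter_last_eq_image_snoc {Ω : Finset (∀ j, Fin (n j))}
    {K : Finset (∀ j : Fin d, Fin (n j.castSucc))} {v : Fin (n (Fin.last d))}
    (hK : ∀ β, (Fin.snoc β v : ∀ j, Fin (n j)) ∈ Ω ↔ β ∈ K) :
    Ω.filter (fun α => α (Fin.last d) = v) = K.image (Fin.snoc · v) := by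
  ext α
  simp only [mem_filter, mem_image]
  constructor
  · rintro ⟨hα, rfl⟩
    rw [← Fin.snoc_init_self α, hK] at hα
    exact ⟨Fin.init α, hα, Fin.snoc_init_self α⟩
  · rintro ⟨β, hβ, rfl⟩
    exact ⟨(hK β).2 hβ, Fin.snoc_last _ _⟩

variable {A : (∀ j, Fin (n j)) → ℝ} {Ω : Finset (∀ j, Fin (n j))} {S : ∀ j, Fin (n j) → ℝ}
  {K : Finset (∀ j : Fin d, Fin (n j.castSucc))}

lemma IsCSS.card_mul_last_eq_sum (hS : IsCSS A Ω S) (hK : K.Nonempty)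
    {v : Fin (n (Fin.last d))} (hv : ∀ β, (Fin.snoc β v : ∀ j, Fin (n j)) ∈ Ω ↔ β ∈ K) :
    (#K : ℝ) * S (Fin.last d) v =
      ∑ β ∈ K, (A (Fin.snoc β v) - ∑ j : Fin d, S j.castSucc (β j)) := by
  have hslice := filter_last_eq_image_snoc hv
  have h := hS (Fin.last d) v (hslice ▸ hK.image _)
  rw [hslice, sum_image (Fin.snoc_left_injective (α := fun j => Fin (n j)) v).injOn] at h
  simp only [sum_apply_snoc, sub_add_eq_sub_sub, sum_sub_distrib, sum_const, nsmul_eq_mul,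
    sub_eq_zero] at h
  rw [← h, sum_sub_distrib]

lemma IsCSS.last_lt_of_forall_lt (hS : IsCSS A Ω S) (hK : K.Nonempty)
    {v w : Fin (n (Fin.last d))}
    (hv : ∀ β, (Fin.snoc β v : ∀ j, Fin (n j)) ∈ Ω ↔ β ∈ K)
    (hw : ∀ β, (Fin.snoc β w : ∀ j, Fin (n j)) ∈ Ω ↔ β ∈ K)
    (hlt : ∀ β ∈ K, A (Fin.snoc β v) < A (Fin.snoc β w)) :
    S (Fin.last d) v < S (Fin.last d) w := by
  have hcard : (0 : ℝ) < #K := by exact_mod_cast hK.card_pos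
  refine lt_of_mul_lt_mul_left ?_ hcard.le
  rw [hS.card_mul_last_eq_sum hK hv, hS.card_mul_last_eq_sum hK hw]
  exact sum_lt_sum_of_nonempty hK fun β hβ => sub_lt_sub_right (hlt β hβ) _

end SnocSlice

theorem consensus_ordering_general {d : ℕ} {n : Fin (d + 1) → ℕ}
    (A : (∀ j, Fin (n j)) → ℝ) (Ω : Finset (∀ j, Fin (n j)))
    {D : ℕ} (γ : Fin D → Fin (n (Fin.last d)))
    (K : Set (∀ j : Fin d, Fin (n j.castSucc))) (hK : K.Nonempty)
    (hknown : ∀ (a : Fin D) (β : ∀ j : Fin d, Fin (n j.castSucc)),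
      (Fin.snoc β (γ a) : ∀ j, Fin (n j)) ∈ Ω ↔ β ∈ K)
    (hord : ∀ β ∈ K, ∀ a b : Fin D, a < b →
      A (Fin.snoc β (γ a)) < A (Fin.snoc β (γ b)))
    (S : ∀ j, Fin (n j) → ℝ) (hS : IsCSS A Ω S)
    (β : ∀ j : Fin d, Fin (n j.castSucc)) :
    ∀ a b : Fin D, a < b →
      (∑ j : Fin d, S j.castSucc (β j)) + S (Fin.last d) (γ a) <
        (∑ j : Fin d, S j.castSucc (β j)) + S (Fin.last d) (γ b) := by
  classical
  intro a b hab
  have hslice (c : Fin D) (β') :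
      (Fin.snoc β' (γ c) : ∀ j, Fin (n j)) ∈ Ω ↔ β' ∈ K.toFinset := by
    rw [Set.mem_toFinset, hknown]
  have hlast := hS.last_lt_of_forall_lt (Set.toFinset_nonempty.2 hK) (hslice a) (hslice b)
    fun β' hβ' => hord β' (Set.mem_toFinset.1 hβ') a b hab
  linarith

/-- Consensus ordering (tensor case, `d + 1 ≥ 2` dimensions): if the slices `γ a` of the
last dimension all have the same nonempty set `K` of known positions and are unanimously
strictly ordered on `K`, then the imputed values at any fully-unknown position `β` are
strictly increasing in the same order. -/
theorem consensus_ordering {d : ℕ} (hd : 1 ≤ d) {n : Fin (d + 1) → ℕ} (hn : ∀ j, 0 < n j)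
    (A : (∀ j, Fin (n j)) → ℝ) (Ω : Finset (∀ j, Fin (n j)))
    {D : ℕ} (hD : 1 ≤ D) (γ : Fin D → Fin (n (Fin.last d))) (hγ : Function.Injective γ)
    (K : Set (∀ j : Fin d, Fin (n j.castSucc))) (hK : K.Nonempty)
    (hknown : ∀ (a : Fin D) (β : ∀ j : Fin d, Fin (n j.castSucc)),
      (Fin.snoc β (γ a) : ∀ j, Fin (n j)) ∈ Ω ↔ β ∈ K)
    (hord : ∀ β ∈ K, ∀ a b : Fin D, a < b →
      A (Fin.snoc β (γ a)) < A (Fin.snoc β (γ b)))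
    (S : ∀ j, Fin (n j) → ℝ) (hS : IsCSS A Ω S)
    (β : ∀ j : Fin d, Fin (n j.castSucc))
    (hβ : ∀ a : Fin D, (Fin.snoc β (γ a) : ∀ j, Fin (n j)) ∉ Ω) :
    ∀ a b : Fin D, a < b →
      (∑ j : Fin d, S j.castSucc (β j)) + S (Fin.last d) (γ a) <
        (∑ j : Fin d, S j.castSucc (β j)) + S (Fin.last d) (γ b) :=
  consensus_ordering_general A Ω γ K hK hknown hord S hS β
end

section
/- Consensus ordering by products (matrix case): let D ≥ 1 and let γ : Fin D → Fin n be injective. Suppose there is a nonempty set K ⊆ Fin m of users such that for every a : Fin D the set of known rows of column γ a is exactly K, and for every i ∈ K and all a < b, A(i, γ a) < A(i, γ b). Then for every canonical shifting solution (r, c) for (A, Ω) and every user u with (u, γ a) ∉ Ω for all a, the imputed values satisfy r u + c (γ a) < r u + c (γ b) whenever a < b. -/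
open Finset

/-- `(r, c)` is a canonical shifting solution for the matrix `A` with known entries `Ω`:
writing `A'(i,j) = A(i,j) - r i - c j`, the sum of `A'` over each nonempty known row slice
and each nonempty known column slice is zero. -/
def IsCSSM {m n : ℕ} (A : Fin m → Fin n → ℝ) (Ω : Finset (Fin m × Fin n))
    (r : Fin m → ℝ) (c : Fin n → ℝ) : Prop :=
  (∀ i : Fin m, (Ω.filter (fun p => p.1 = i)).Nonempty →
    ∑ p ∈ Ω.filter (fun p => p.1 = i), (A p.1 p.2 - r p.1 - c p.2) = 0) ∧
  (∀ j : Fin n, (Ω.filter (fun p => p.2 = j)).Nonempty →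
    ∑ p ∈ Ω.filter (fun p => p.2 = j), (A p.1 p.2 - r p.1 - c p.2) = 0)

/-- An unknown entry `(i, j)` is fully supported w.r.t. `Ω` if it is a corner of a
rectangle whose other three corners are known. -/
def FullySupportedM {m n : ℕ} (Ω : Finset (Fin m × Fin n)) (i : Fin m) (j : Fin n) : Prop :=
  ∃ (i' : Fin m) (j' : Fin n), i' ≠ i ∧ j' ≠ j ∧
    (i', j) ∈ Ω ∧ (i, j') ∈ Ω ∧ (i', j') ∈ Ω

/-- Consensus ordering by products (matrix case): if the columns `γ a` have the same
nonempty set `K` of known rows and are unanimously strictly ordered on `K`, then for any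
user `u` with all entries `(u, γ a)` unknown, the imputed values are strictly increasing. -/
theorem consensus_ordering_products {m n : ℕ} (hm : 0 < m) (hn : 0 < n)
    (A : Fin m → Fin n → ℝ) (Ω : Finset (Fin m × Fin n))
    {D : ℕ} (hD : 1 ≤ D) (γ : Fin D → Fin n) (hγ : Function.Injective γ)
    (K : Set (Fin m)) (hKne : K.Nonempty)
    (hknown : ∀ (a : Fin D) (i : Fin m), (i, γ a) ∈ Ω ↔ i ∈ K)
    (hord : ∀ i ∈ K, ∀ a b : Fin D, a < b → A i (γ a) < A i (γ b))
    (r : Fin m → ℝ) (c : Fin n → ℝ) (h : IsCSSM A Ω r c)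
    (u : Fin m) (hu : ∀ a : Fin D, (u, γ a) ∉ Ω) :
    ∀ a b : Fin D, a < b → r u + c (γ a) < r u + c (γ b) := by
  classical
  intro a b hab
  have key : ∀ d : Fin D,
      Ω.filter (fun p => p.2 = γ d) = (K.toFinset).image (fun i => (i, γ d)) := by
    intro d
    ext p
    simp only [mem_filter, mem_image, Set.mem_toFinset]
    constructor
    · rintro ⟨hp, hp2⟩
      refine ⟨p.1, (hknown d p.1).mp ?_, ?_⟩
      · rwa [← hp2, Prod.mk.eta]
      · rw [← hp2]
    · rintro ⟨i, hi, rfl⟩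
      exact ⟨(hknown d i).mpr hi, rfl⟩
  have hinj : ∀ d : Fin D, ∀ x ∈ K.toFinset, ∀ y ∈ K.toFinset,
      (fun i => (i, γ d)) x = (fun i => (i, γ d)) y → x = y := by
    intro d x _ y _ hxy
    exact congrArg Prod.fst hxy
  have hKfne : K.toFinset.Nonempty := by
    obtain ⟨k, hk⟩ := hKne
    exact ⟨k, Set.mem_toFinset.mpr hk⟩
  have hsum : ∀ d : Fin D,
      ∑ i ∈ K.toFinset, (A i (γ d) - r i - c (γ d)) = 0 := by
    intro d
    have hne : (Ω.filter (fun p => p.2 = γ d)).Nonempty := by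
      obtain ⟨k, hk⟩ := hKne
      exact ⟨(k, γ d), mem_filter.mpr ⟨(hknown d k).mpr hk, rfl⟩⟩
    have := h.2 (γ d) hne
    rw [key d, Finset.sum_image (hinj d)] at this
    exact this
  have expand : ∀ d : Fin D,
      (∑ i ∈ K.toFinset, A i (γ d)) - (∑ i ∈ K.toFinset, r i)
        - (K.toFinset.card : ℝ) * c (γ d) = 0 := by
    intro d
    have := hsum d
    rw [Finset.sum_sub_distrib, Finset.sum_sub_distrib, Finset.sum_const,
      nsmul_eq_mul] at this
    linarith
  have hSlt : ∑ i ∈ K.toFinset, A i (γ a) < ∑ i ∈ K.toFinset, A i (γ b) := by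
    refine Finset.sum_lt_sum_of_nonempty hKfne ?_
    intro i hi
    exact hord i (Set.mem_toFinset.mp hi) a b hab
  have hcard : (0:ℝ) < (K.toFinset.card : ℝ) := by
    exact_mod_cast Finset.card_pos.mpr hKfne
  have := expand a
  have := expand b
  have hclt : c (γ a) < c (γ b) := by
    rw [← sub_pos]
    have h1 : (K.toFinset.card : ℝ) * (c (γ b) - c (γ a)) =
        (∑ i ∈ K.toFinset, A i (γ b)) - (∑ i ∈ K.toFinset, A i (γ a)) := by
      have ea := expand a
      have eb := expand b
      ring_nf
      ring_nf at ea eb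
      linarith
    nlinarith
  linarith
end

section
/- Consensus ordering by users (matrix case): let D ≥ 1 and let γ : Fin D → Fin m be injective. Suppose there is a nonempty set K ⊆ Fin n of products such that for every a : Fin D the set of known columns of row γ a is exactly K, and for every j ∈ K and all a < b, A(γ a, j) < A(γ b, j). Then for every canonical shifting solution (r, c) for (A, Ω) and every product p with (γ a, p) ∉ Ω for all a, the imputed values satisfy r (γ a) + c p < r (γ b) + c p whenever a < b. -/
open Finset

/-- Consensus ordering by users (matrix case): if the rows `γ a` have the same nonempty
set `K` of known columns and are unanimously strictly ordered on `K`, then for any product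
`p` with all entries `(γ a, p)` unknown, the imputed values are strictly increasing. -/
theorem consensus_ordering_users {m n : ℕ} (hm : 0 < m) (hn : 0 < n)
    (A : Fin m → Fin n → ℝ) (Ω : Finset (Fin m × Fin n))
    {D : ℕ} (hD : 1 ≤ D) (γ : Fin D → Fin m) (hγ : Function.Injective γ)
    (K : Set (Fin n)) (hKne : K.Nonempty)
    (hknown : ∀ (a : Fin D) (j : Fin n), (γ a, j) ∈ Ω ↔ j ∈ K)
    (hord : ∀ j ∈ K, ∀ a b : Fin D, a < b → A (γ a) j < A (γ b) j)
    (r : Fin m → ℝ) (c : Fin n → ℝ) (h : IsCSSM A Ω r c)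
    (p : Fin n) (hp : ∀ a : Fin D, (γ a, p) ∉ Ω) :
    ∀ a b : Fin D, a < b → r (γ a) + c p < r (γ b) + c p := by
  classical
  intro a b hab
  set Kf : Finset (Fin n) := Finset.univ.filter (fun j => j ∈ K) with hKfdef
  have hKfmem : ∀ j, j ∈ Kf ↔ j ∈ K := by
    intro j; simp [hKfdef]
  have hKfne : Kf.Nonempty := by
    obtain ⟨j, hj⟩ := hKne
    exact ⟨j, (hKfmem j).2 hj⟩
  have hrow : ∀ x : Fin D,
      Ω.filter (fun q => q.1 = γ x) = Kf.image (fun j => (γ x, j)) := by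
    intro x
    ext q
    simp only [Finset.mem_filter, Finset.mem_image]
    constructor
    · rintro ⟨hq, hq1⟩
      refine ⟨q.2, ?_, ?_⟩
      · rw [hKfmem]
        exact (hknown x q.2).1 (by rw [← hq1]; exact hq)
      · rw [← hq1]
    · rintro ⟨j, hj, rfl⟩
      exact ⟨(hknown x j).2 ((hKfmem j).1 hj), rfl⟩
  have hsum : ∀ x : Fin D,
      ∑ j ∈ Kf, (A (γ x) j - c j) = Kf.card * r (γ x) := by
    intro x
    have hne : (Ω.filter (fun q => q.1 = γ x)).Nonempty := by
      rw [hrow x]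
      exact hKfne.image _
    have h0 := h.1 (γ x) hne
    rw [hrow x, Finset.sum_image (by intro u _ v _ huv; exact (Prod.ext_iff.1 huv).2)] at h0
    have : ∑ j ∈ Kf, (A (γ x) j - c j) - ∑ j ∈ Kf, r (γ x) = 0 := by
      rw [← Finset.sum_sub_distrib]
      convert h0 using 2 with j
      ring
    rw [Finset.sum_const, nsmul_eq_mul] at this
    linarith
  have hlt : ∑ j ∈ Kf, (A (γ a) j - c j) < ∑ j ∈ Kf, (A (γ b) j - c j) := by
    apply Finset.sum_lt_sum_of_nonempty hKfne
    intro j hj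
    have := hord j ((hKfmem j).1 hj) a b hab
    linarith
  rw [hsum a, hsum b] at hlt
  have hcard : (0:ℝ) < Kf.card := by
    exact_mod_cast Finset.card_pos.2 hKfne
  have : r (γ a) < r (γ b) := by
    rcases lt_or_ge (r (γ a)) (r (γ b)) with h' | h'
    · exact h'
    · nlinarith
  linarith
end

section
/- Consensus ordering by attributes (3-dimensional case): let D ≥ 1 and let γ : Fin D → Fin q be injective (a selection of D attribute slices). Suppose there is a nonempty set K ⊆ Fin m × Fin n of user–product pairs such that for every a : Fin D, {(u,p) | (u, γ a, p) ∈ Ω} = K, and for every (u,p) ∈ K and all a < b, A(u, γ a, p) < A(u, γ b, p). Then for every canonical shifting solution (S₁, S₂, S₃) for (A, Ω) and every (u,p) with (u, γ a, p) ∉ Ω for all a, the imputed values satisfy S₁ u + S₂ (γ a) + S₃ p < S₁ u + S₂ (γ b) + S₃ p whenever a < b. -/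
open Finset

/-- `(S₁, S₂, S₃)` is a canonical shifting solution for the 3-dimensional tensor `A`
(users × attributes × products) with known entries `Ω`: writing
`A'(u,α,p) = A(u,α,p) - S₁ u - S₂ α - S₃ p`, the sum of `A'` over each nonempty known
user slice, attribute slice, and product slice is zero. -/
def IsCSS3 {m q n : ℕ} (A : Fin m → Fin q → Fin n → ℝ)
    (Ω : Finset (Fin m × Fin q × Fin n))
    (S₁ : Fin m → ℝ) (S₂ : Fin q → ℝ) (S₃ : Fin n → ℝ) : Prop :=
  (∀ u : Fin m, (Ω.filter (fun x => x.1 = u)).Nonempty →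
    ∑ x ∈ Ω.filter (fun x => x.1 = u),
      (A x.1 x.2.1 x.2.2 - S₁ x.1 - S₂ x.2.1 - S₃ x.2.2) = 0) ∧
  (∀ α : Fin q, (Ω.filter (fun x => x.2.1 = α)).Nonempty →
    ∑ x ∈ Ω.filter (fun x => x.2.1 = α),
      (A x.1 x.2.1 x.2.2 - S₁ x.1 - S₂ x.2.1 - S₃ x.2.2) = 0) ∧
  (∀ p : Fin n, (Ω.filter (fun x => x.2.2 = p)).Nonempty →
    ∑ x ∈ Ω.filter (fun x => x.2.2 = p),
      (A x.1 x.2.1 x.2.2 - S₁ x.1 - S₂ x.2.1 - S₃ x.2.2) = 0)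

/-- Consensus ordering by attributes (3-dimensional case): if the attribute slices `γ a`
have the same nonempty set `K` of known user–product pairs and are unanimously strictly
ordered on `K`, then for any `(u, p)` with all entries `(u, γ a, p)` unknown, the imputed
values are strictly increasing in the same order. -/
theorem consensus_ordering_attributes {m q n : ℕ} (hm : 0 < m) (hq : 0 < q) (hn : 0 < n)
    (A : Fin m → Fin q → Fin n → ℝ) (Ω : Finset (Fin m × Fin q × Fin n))
    {D : ℕ} (hD : 1 ≤ D) (γ : Fin D → Fin q) (hγ : Function.Injective γ)
    (K : Set (Fin m × Fin n)) (hKne : K.Nonempty)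
    (hknown : ∀ (a : Fin D) (u : Fin m) (p : Fin n), (u, γ a, p) ∈ Ω ↔ (u, p) ∈ K)
    (hord : ∀ up ∈ K, ∀ a b : Fin D, a < b → A up.1 (γ a) up.2 < A up.1 (γ b) up.2)
    (S₁ : Fin m → ℝ) (S₂ : Fin q → ℝ) (S₃ : Fin n → ℝ) (h : IsCSS3 A Ω S₁ S₂ S₃)
    (u : Fin m) (p : Fin n) (hup : ∀ a : Fin D, (u, γ a, p) ∉ Ω) :
    ∀ a b : Fin D, a < b →
      S₁ u + S₂ (γ a) + S₃ p < S₁ u + S₂ (γ b) + S₃ p := by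
  classical
  intro a b hab
  set K' : Finset (Fin m × Fin n) := Finset.univ.filter (fun w => w ∈ K) with hK'
  have hmemK' : ∀ w : Fin m × Fin n, w ∈ K' ↔ w ∈ K := by
    intro w; simp [hK']
  have hK'ne : K'.Nonempty := by
    obtain ⟨w, hw⟩ := hKne
    exact ⟨w, (hmemK' w).2 hw⟩
  -- the filtered slice for attribute γ c is the image of K'
  have hfilt : ∀ c : Fin D,
      Ω.filter (fun x => x.2.1 = γ c) = K'.image (fun w => (w.1, γ c, w.2)) := by
    intro c
    ext x
    simp only [Finset.mem_filter, Finset.mem_image]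
    constructor
    · rintro ⟨hx, hx2⟩
      refine ⟨(x.1, x.2.2), ?_, ?_⟩
      · rw [hmemK']
        have := (hknown c x.1 x.2.2).1 (by
          have : x = (x.1, γ c, x.2.2) := by
            obtain ⟨x1, x2, x3⟩ := x
            simp_all
          rwa [this] at hx)
        exact this
      · obtain ⟨x1, x2, x3⟩ := x; simp_all
    · rintro ⟨w, hw, rfl⟩
      exact ⟨(hknown c w.1 w.2).2 ((hmemK' w).1 hw), rfl⟩
  have hsum : ∀ c : Fin D,
      ∑ w ∈ K', (A w.1 (γ c) w.2 - S₁ w.1 - S₂ (γ c) - S₃ w.2) = 0 := by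
    intro c
    have hinj : Set.InjOn (fun w : Fin m × Fin n => (w.1, γ c, w.2)) K' := by
      intro x _ y _ hxy
      obtain ⟨x1, x2⟩ := x; obtain ⟨y1, y2⟩ := y
      simpa [Prod.ext_iff] using hxy
    have hne : (Ω.filter (fun x => x.2.1 = γ c)).Nonempty := by
      rw [hfilt c]
      exact hK'ne.image _
    have := h.2.1 (γ c) hne
    rw [hfilt c, Finset.sum_image (fun x hx y hy h => hinj hx hy h)] at this
    exact this
  have ha := hsum a
  have hb := hsum b
  have hstrict : ∑ w ∈ K', A w.1 (γ a) w.2 < ∑ w ∈ K', A w.1 (γ b) w.2 := by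
    apply Finset.sum_lt_sum_of_nonempty hK'ne
    intro w hw
    exact hord w ((hmemK' w).1 hw) a b hab
  have hcard : (0 : ℝ) < K'.card := by
    exact_mod_cast Finset.card_pos.2 hK'ne
  have hexp : ∀ c : Fin D,
      ∑ w ∈ K', (A w.1 (γ c) w.2 - S₁ w.1 - S₂ (γ c) - S₃ w.2)
        = ∑ w ∈ K', A w.1 (γ c) w.2 - ∑ w ∈ K', S₁ w.1
          - K'.card * S₂ (γ c) - ∑ w ∈ K', S₃ w.2 := by
    intro c
    rw [Finset.sum_sub_distrib, Finset.sum_sub_distrib, Finset.sum_sub_distrib,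
      Finset.sum_const, nsmul_eq_mul]
  rw [hexp a] at ha
  rw [hexp b] at hb
  have : (K'.card : ℝ) * S₂ (γ a) < K'.card * S₂ (γ b) := by linarith
  have h2 : S₂ (γ a) < S₂ (γ b) := lt_of_mul_lt_mul_left (by linarith [this]) (le_of_lt hcard)
  linarith
end

section
/- Fairness / shift-robustness (matrix case): fix a user u : Fin m and t : ℝ, and define A_t by A_t(i,j) = A(i,j) + t if i = u and A_t(i,j) = A(i,j) otherwise. Let (r, c) be any canonical shifting solution for (A, Ω) and (r̃, c̃) any canonical shifting solution for (A_t, Ω). Then for every (u', p) ∉ Ω with u' ≠ u that is fully supported with respect to Ω, the imputed values agree: r̃ u' + c̃ p = r u' + c p. -/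
open Finset

lemma css_row_sum {m n : ℕ} (A : Fin m → Fin n → ℝ) (Ω : Finset (Fin m × Fin n))
    (r : Fin m → ℝ) (c : Fin n → ℝ) (h : IsCSSM A Ω r c) (i : Fin m) :
    ∑ p ∈ Ω.filter (fun p => p.1 = i), (A p.1 p.2 - r p.1 - c p.2) = 0 := by
  rcases (Ω.filter (fun p => p.1 = i)).eq_empty_or_nonempty with he | hne
  · simp [he]
  · exact h.1 i hne

lemma css_col_sum {m n : ℕ} (A : Fin m → Fin n → ℝ) (Ω : Finset (Fin m × Fin n))
    (r : Fin m → ℝ) (c : Fin n → ℝ) (h : IsCSSM A Ω r c) (j : Fin n) :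
    ∑ p ∈ Ω.filter (fun p => p.2 = j), (A p.1 p.2 - r p.1 - c p.2) = 0 := by
  rcases (Ω.filter (fun p => p.2 = j)).eq_empty_or_nonempty with he | hne
  · simp [he]
  · exact h.2 j hne

lemma css_diff_zero {m n : ℕ} (A : Fin m → Fin n → ℝ) (Ω : Finset (Fin m × Fin n))
    (r r' : Fin m → ℝ) (c c' : Fin n → ℝ)
    (h : IsCSSM A Ω r c) (h' : IsCSSM A Ω r' c') :
    ∀ p ∈ Ω, (r p.1 - r' p.1) + (c p.2 - c' p.2) = 0 := by
  set f : Fin m × Fin n → ℝ := fun p => (r p.1 - r' p.1) + (c p.2 - c' p.2) with hf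
  have hrow : ∀ i, ∑ p ∈ Ω.filter (fun p => p.1 = i), f p = 0 := by
    intro i
    have h1 := css_row_sum A Ω r c h i
    have h2 := css_row_sum A Ω r' c' h' i
    have he : ∑ p ∈ Ω.filter (fun p => p.1 = i), f p
        = ∑ p ∈ Ω.filter (fun p => p.1 = i),
            ((A p.1 p.2 - r' p.1 - c' p.2) - (A p.1 p.2 - r p.1 - c p.2)) := by
      refine Finset.sum_congr rfl fun p _ => ?_
      simp only [hf]; ring
    rw [he, Finset.sum_sub_distrib, h1, h2, sub_zero]
  have hcol : ∀ j, ∑ p ∈ Ω.filter (fun p => p.2 = j), f p = 0 := by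
    intro j
    have h1 := css_col_sum A Ω r c h j
    have h2 := css_col_sum A Ω r' c' h' j
    have he : ∑ p ∈ Ω.filter (fun p => p.2 = j), f p
        = ∑ p ∈ Ω.filter (fun p => p.2 = j),
            ((A p.1 p.2 - r' p.1 - c' p.2) - (A p.1 p.2 - r p.1 - c p.2)) := by
      refine Finset.sum_congr rfl fun p _ => ?_
      simp only [hf]; ring
    rw [he, Finset.sum_sub_distrib, h1, h2, sub_zero]
  have e1 : ∑ p ∈ Ω, f p * (r p.1 - r' p.1) = 0 := by
    rw [← Finset.sum_fiberwise Ω (fun p => p.1) (fun p => f p * (r p.1 - r' p.1))]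
    refine Finset.sum_eq_zero fun i _ => ?_
    have he : ∑ p ∈ Ω.filter (fun p => p.1 = i), f p * (r p.1 - r' p.1)
        = (r i - r' i) * ∑ p ∈ Ω.filter (fun p => p.1 = i), f p := by
      rw [Finset.mul_sum]
      refine Finset.sum_congr rfl fun p hp => ?_
      have hpi : p.1 = i := (Finset.mem_filter.mp hp).2
      rw [hpi]; ring
    rw [he, hrow, mul_zero]
  have e2 : ∑ p ∈ Ω, f p * (c p.2 - c' p.2) = 0 := by
    rw [← Finset.sum_fiberwise Ω (fun p => p.2) (fun p => f p * (c p.2 - c' p.2))]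
    refine Finset.sum_eq_zero fun j _ => ?_
    have he : ∑ p ∈ Ω.filter (fun p => p.2 = j), f p * (c p.2 - c' p.2)
        = (c j - c' j) * ∑ p ∈ Ω.filter (fun p => p.2 = j), f p := by
      rw [Finset.mul_sum]
      refine Finset.sum_congr rfl fun p hp => ?_
      have hpj : p.2 = j := (Finset.mem_filter.mp hp).2
      rw [hpj]; ring
    rw [he, hcol, mul_zero]
  have hsq : ∑ p ∈ Ω, f p ^ 2 = 0 := by
    have he : ∑ p ∈ Ω, f p ^ 2
        = ∑ p ∈ Ω, (f p * (r p.1 - r' p.1) + f p * (c p.2 - c' p.2)) := by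
      refine Finset.sum_congr rfl fun p _ => ?_
      simp only [hf]; ring
    rw [he, Finset.sum_add_distrib, e1, e2, add_zero]
  intro p hp
  have hz := (Finset.sum_eq_zero_iff_of_nonneg (fun q _ => sq_nonneg (f q))).mp hsq p hp
  exact pow_eq_zero_iff two_ne_zero |>.mp hz

/-- Fairness / shift-robustness (matrix case): if user `u` shifts all of their ratings by
`t`, the imputed values at fully supported unknown entries of other users are unchanged. -/
theorem fairness_shift_robust_matrix {m n : ℕ} (hm : 0 < m) (hn : 0 < n)
    (A : Fin m → Fin n → ℝ) (Ω : Finset (Fin m × Fin n))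
    (u : Fin m) (t : ℝ)
    (r : Fin m → ℝ) (c : Fin n → ℝ)
    (rt : Fin m → ℝ) (ct : Fin n → ℝ)
    (h : IsCSSM A Ω r c)
    (ht : IsCSSM (fun i j => if i = u then A i j + t else A i j) Ω rt ct) :
    ∀ (u' : Fin m) (p : Fin n), (u', p) ∉ Ω → u' ≠ u → FullySupportedM Ω u' p →
      rt u' + ct p = r u' + c p := by
  set r' : Fin m → ℝ := fun i => if i = u then rt i - t else rt i with hr'
  have hterm : ∀ p : Fin m × Fin n,
      A p.1 p.2 - r' p.1 - ct p.2
        = (if p.1 = u then A p.1 p.2 + t else A p.1 p.2) - rt p.1 - ct p.2 := by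
    intro p
    by_cases hpu : p.1 = u <;> simp [hr', hpu] <;> ring
  have h' : IsCSSM A Ω r' ct := by
    constructor
    · intro i hne
      have := ht.1 i hne
      rw [← this]
      exact Finset.sum_congr rfl fun p _ => hterm p
    · intro j hne
      have := ht.2 j hne
      rw [← this]
      exact Finset.sum_congr rfl fun p _ => hterm p
  intro u' p hnot hne hfs
  obtain ⟨i', j', hi', hj', h1, h2, h3⟩ := hfs
  have d := css_diff_zero A Ω r' r ct c h' h
  have d1 := d (i', p) h1
  have d2 := d (u', j') h2
  have d3 := d (i', j') h3
  simp only at d1 d2 d3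
  have hru : r' u' = rt u' := by simp [hr', hne]
  have hri : r' u' - r u' + (ct p - c p) = 0 := by linarith
  rw [hru] at hri
  linarith
end

section
/- Uniqueness of the canonical shifted matrix: if (r, c) and (r', c') are both canonical shifting solutions for (A, Ω), then r i + c j = r' i + c' j for every (i,j) ∈ Ω; equivalently, the shifted matrices A(i,j) − r i − c j and A(i,j) − r' i − c' j agree on all known entries. -/
open Finset

/-- Uniqueness of the canonical shifted matrix: any two canonical shifting solutions
agree (as per-entry shift totals, hence as shifted matrices) on all known entries. -/
theorem cssm_unique_on_known {m n : ℕ} (hm : 0 < m) (hn : 0 < n)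
    (A : Fin m → Fin n → ℝ) (Ω : Finset (Fin m × Fin n))
    (r r' : Fin m → ℝ) (c c' : Fin n → ℝ)
    (h : IsCSSM A Ω r c) (h' : IsCSSM A Ω r' c') :
    ∀ i j, (i, j) ∈ Ω → r i + c j = r' i + c' j := by
  set d : Fin m × Fin n → ℝ := fun p => (r p.1 + c p.2) - (r' p.1 + c' p.2) with hd
  -- row sums of d vanish
  have hrow : ∀ i : Fin m, ∑ p ∈ Ω.filter (fun p => p.1 = i), d p = 0 := by
    intro i
    rcases (Ω.filter (fun p => p.1 = i)).eq_empty_or_nonempty with he | hne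
    · simp [he]
    · have h1 := h.1 i hne
      have h2 := h'.1 i hne
      have : ∑ p ∈ Ω.filter (fun p => p.1 = i), d p =
          (∑ p ∈ Ω.filter (fun p => p.1 = i), (A p.1 p.2 - r' p.1 - c' p.2)) -
          (∑ p ∈ Ω.filter (fun p => p.1 = i), (A p.1 p.2 - r p.1 - c p.2)) := by
        rw [← Finset.sum_sub_distrib]
        apply Finset.sum_congr rfl
        intro p _
        simp [hd]; ring
      rw [this, h1, h2, sub_zero]
  have hcol : ∀ j : Fin n, ∑ p ∈ Ω.filter (fun p => p.2 = j), d p = 0 := by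
    intro j
    rcases (Ω.filter (fun p => p.2 = j)).eq_empty_or_nonempty with he | hne
    · simp [he]
    · have h1 := h.2 j hne
      have h2 := h'.2 j hne
      have : ∑ p ∈ Ω.filter (fun p => p.2 = j), d p =
          (∑ p ∈ Ω.filter (fun p => p.2 = j), (A p.1 p.2 - r' p.1 - c' p.2)) -
          (∑ p ∈ Ω.filter (fun p => p.2 = j), (A p.1 p.2 - r p.1 - c p.2)) := by
        rw [← Finset.sum_sub_distrib]
        apply Finset.sum_congr rfl
        intro p _
        simp [hd]; ring
      rw [this, h1, h2, sub_zero]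
  -- ∑ d p * ((r-r') p.1) = 0
  have hA : ∑ p ∈ Ω, d p * (r p.1 - r' p.1) = 0 := by
    rw [← Finset.sum_fiberwise_of_maps_to (g := fun p => p.1) (t := Finset.univ)
      (fun p _ => Finset.mem_univ _)]
    apply Finset.sum_eq_zero
    intro i _
    have : ∑ p ∈ Ω.filter (fun p => p.1 = i), d p * (r p.1 - r' p.1) =
        ∑ p ∈ Ω.filter (fun p => p.1 = i), d p * (r i - r' i) := by
      apply Finset.sum_congr rfl
      intro p hp
      rw [(Finset.mem_filter.mp hp).2]
    rw [this, ← Finset.sum_mul, hrow i, zero_mul]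
  have hB : ∑ p ∈ Ω, d p * (c p.2 - c' p.2) = 0 := by
    rw [← Finset.sum_fiberwise_of_maps_to (g := fun p => p.2) (t := Finset.univ)
      (fun p _ => Finset.mem_univ _)]
    apply Finset.sum_eq_zero
    intro j _
    have : ∑ p ∈ Ω.filter (fun p => p.2 = j), d p * (c p.2 - c' p.2) =
        ∑ p ∈ Ω.filter (fun p => p.2 = j), d p * (c j - c' j) := by
      apply Finset.sum_congr rfl
      intro p hp
      rw [(Finset.mem_filter.mp hp).2]
    rw [this, ← Finset.sum_mul, hcol j, zero_mul]
  have hsq : ∑ p ∈ Ω, (d p) ^ 2 = 0 := by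
    have : ∑ p ∈ Ω, (d p) ^ 2 =
        ∑ p ∈ Ω, (d p * (r p.1 - r' p.1) + d p * (c p.2 - c' p.2)) := by
      apply Finset.sum_congr rfl
      intro p _
      simp [hd]; ring
    rw [this, Finset.sum_add_distrib, hA, hB, add_zero]
  have hzero := (Finset.sum_eq_zero_iff_of_nonneg (fun p _ => sq_nonneg (d p))).mp hsq
  intro i j hij
  have := hzero (i, j) hij
  have hdz : d (i, j) = 0 := by
    have := sq_eq_zero_iff.mp this
    exact this
  simp [hd] at hdz
  linarith
end

section
/- Uniqueness of the matrix completion at fully supported entries: if (i,j) ∉ Ω is fully supported with respect to Ω, then any two canonical shifting solutions (r, c) and (r', c') for (A, Ω) determine the same imputed value at (i,j), i.e., r i + c j = r' i + c' j. -/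
open Finset

/-- Uniqueness of the matrix completion at fully supported entries: any two canonical
shifting solutions impute the same value there. -/
theorem cssm_unique_imputed_fully_supported {m n : ℕ} (hm : 0 < m) (hn : 0 < n)
    (A : Fin m → Fin n → ℝ) (Ω : Finset (Fin m × Fin n))
    (i : Fin m) (j : Fin n) (hij : (i, j) ∉ Ω) (hfs : FullySupportedM Ω i j)
    (r r' : Fin m → ℝ) (c c' : Fin n → ℝ)
    (h : IsCSSM A Ω r c) (h' : IsCSSM A Ω r' c') :
    r i + c j = r' i + c' j := by
  set δ : Fin m × Fin n → ℝ := fun p => (r p.1 - r' p.1) + (c p.2 - c' p.2) with hδ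
  -- row fiber sums of δ vanish
  have hrow : ∀ i0 : Fin m, ∑ p ∈ Ω.filter (fun p => p.1 = i0), δ p = 0 := by
    intro i0
    rcases (Ω.filter (fun p => p.1 = i0)).eq_empty_or_nonempty with he | hne
    · simp [he]
    · have h1 := h.1 i0 hne
      have h2 := h'.1 i0 hne
      have : ∑ p ∈ Ω.filter (fun p => p.1 = i0),
          ((A p.1 p.2 - r' p.1 - c' p.2) - (A p.1 p.2 - r p.1 - c p.2)) = 0 := by
        rw [Finset.sum_sub_distrib, h1, h2]; ring
      rw [← this]
      apply Finset.sum_congr rfl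
      intro p _
      simp [hδ]; ring
  have hcol : ∀ j0 : Fin n, ∑ p ∈ Ω.filter (fun p => p.2 = j0), δ p = 0 := by
    intro j0
    rcases (Ω.filter (fun p => p.2 = j0)).eq_empty_or_nonempty with he | hne
    · simp [he]
    · have h1 := h.2 j0 hne
      have h2 := h'.2 j0 hne
      have : ∑ p ∈ Ω.filter (fun p => p.2 = j0),
          ((A p.1 p.2 - r' p.1 - c' p.2) - (A p.1 p.2 - r p.1 - c p.2)) = 0 := by
        rw [Finset.sum_sub_distrib, h1, h2]; ring
      rw [← this]
      apply Finset.sum_congr rfl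
      intro p _
      simp [hδ]; ring
  -- energy argument: sum of squares of δ over Ω is zero
  have hsq : ∑ p ∈ Ω, δ p ^ 2 = 0 := by
    have hsplit : ∑ p ∈ Ω, δ p ^ 2 =
        (∑ p ∈ Ω, δ p * (r p.1 - r' p.1)) + (∑ p ∈ Ω, δ p * (c p.2 - c' p.2)) := by
      rw [← Finset.sum_add_distrib]
      apply Finset.sum_congr rfl
      intro p _; simp [hδ]; ring
    have hr0 : ∑ p ∈ Ω, δ p * (r p.1 - r' p.1) = 0 := by
      rw [← Finset.sum_fiberwise (g := fun p : Fin m × Fin n => p.1)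
        (f := fun p => δ p * (r p.1 - r' p.1))]
      apply Finset.sum_eq_zero
      intro i0 _
      have : ∑ p ∈ Ω.filter (fun p => p.1 = i0), δ p * (r p.1 - r' p.1)
          = (∑ p ∈ Ω.filter (fun p => p.1 = i0), δ p) * (r i0 - r' i0) := by
        rw [Finset.sum_mul]
        apply Finset.sum_congr rfl
        intro p hp
        have : p.1 = i0 := (Finset.mem_filter.mp hp).2
        rw [this]
      rw [this, hrow, zero_mul]
    have hc0 : ∑ p ∈ Ω, δ p * (c p.2 - c' p.2) = 0 := by
      rw [← Finset.sum_fiberwise (g := fun p : Fin m × Fin n => p.2)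
        (f := fun p => δ p * (c p.2 - c' p.2))]
      apply Finset.sum_eq_zero
      intro j0 _
      have : ∑ p ∈ Ω.filter (fun p => p.2 = j0), δ p * (c p.2 - c' p.2)
          = (∑ p ∈ Ω.filter (fun p => p.2 = j0), δ p) * (c j0 - c' j0) := by
        rw [Finset.sum_mul]
        apply Finset.sum_congr rfl
        intro p hp
        have : p.2 = j0 := (Finset.mem_filter.mp hp).2
        rw [this]
      rw [this, hcol, zero_mul]
    rw [hsplit, hr0, hc0, add_zero]
  have hzero : ∀ p ∈ Ω, δ p = 0 := by
    intro p hp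
    have := (Finset.sum_eq_zero_iff_of_nonneg (fun q _ => sq_nonneg (δ q))).mp hsq p hp
    exact pow_eq_zero_iff two_ne_zero |>.mp this
  obtain ⟨i', j', _, _, h1, h2, h3⟩ := hfs
  have e1 := hzero _ h1
  have e2 := hzero _ h2
  have e3 := hzero _ h3
  simp only [hδ] at e1 e2 e3
  have : (r i - r' i) + (c j - c' j) = 0 := by linarith
  linarith
end

section
/- Shift consistency of matrix completion: let t_r : Fin m → ℝ and t_c : Fin n → ℝ, and define A_t(i,j) = A(i,j) + t_r i + t_c j. Then (r, c) is a canonical shifting solution for (A, Ω) if and only if (r + t_r, c + t_c) is a canonical shifting solution for (A_t, Ω); consequently, the imputed value determined by (r + t_r, c + t_c) at any (i,j) ∉ Ω equals the imputed value determined by (r, c) plus t_r i + t_c j. (In the notation of the paper: R ⊗ 1_n + MCA(A) + 1_m ⊗ C = MCA(R ⊗ 1_n + A + 1_m ⊗ C).) -/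
open Finset

/-- Shift consistency of matrix completion: `(r, c)` solves the canonical shifting
problem for `A` iff `(r + t_r, c + t_c)` solves it for the shifted matrix
`A_t(i,j) = A(i,j) + t_r i + t_c j`; and the imputed value determined by
`(r + t_r, c + t_c)` at any unknown entry is that of `(r, c)` plus the shift. -/
theorem mca_shift_consistent {m n : ℕ} (hm : 0 < m) (hn : 0 < n)
    (A : Fin m → Fin n → ℝ) (Ω : Finset (Fin m × Fin n))
    (tr : Fin m → ℝ) (tc : Fin n → ℝ)
    (r : Fin m → ℝ) (c : Fin n → ℝ) :
    (IsCSSM A Ω r c ↔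
      IsCSSM (fun i j => A i j + tr i + tc j) Ω
        (fun i => r i + tr i) (fun j => c j + tc j)) ∧
    ∀ i j, (i, j) ∉ Ω →
      (r i + tr i) + (c j + tc j) = (r i + c j) + (tr i + tc j) := by
  constructor
  · unfold IsCSSM
    have : ∀ (p : Fin m × Fin n),
        (A p.1 p.2 + tr p.1 + tc p.2 - (r p.1 + tr p.1) - (c p.2 + tc p.2)) =
          A p.1 p.2 - r p.1 - c p.2 := by intro p; ring
    simp only [this]
  · intro i j _; ring
end

section
/- Existence of a canonical shifting solution (matrix case): for every matrix A : Fin m → Fin n → ℝ and every finite set Ω ⊆ Fin m × Fin n of known entries, there exists a canonical shifting solution (r, c) for (A, Ω). (For instance, any minimizer of the convex quadratic (r, c) ↦ ∑_{(i,j) ∈ Ω} (A(i,j) − r i − c j)² satisfies the defining zero-sum conditions.) -/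
open Finset

theorem LinearMap.exists_forall_sum_sub_mul_eq_zero {ι V : Type*} [Fintype ι] [AddCommGroup V]
    [Module ℝ V] (L : V →ₗ[ℝ] ι → ℝ) (a : ι → ℝ) :
    ∃ v, ∀ w, ∑ i, (a i - L v i) * L w i = 0 := by
  let K := LinearMap.range ((WithLp.linearEquiv 2 ℝ (ι → ℝ)).symm.toLinearMap ∘ₗ L)
  obtain ⟨_, ⟨v, rfl⟩, z, hz, hsum⟩ := K.exists_add_mem_mem_orthogonal (WithLp.toLp 2 a)
  have hres : ∀ i, a i - L v i = z i := fun i => by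
    rw [sub_eq_iff_eq_add', ← WithLp.ofLp_toLp 2 a, hsum]; rfl
  refine ⟨v, fun w => ?_⟩
  have hw := (Submodule.mem_orthogonal' K z).mp hz _ (LinearMap.mem_range_self _ w)
  rw [EuclideanSpace.inner_eq_star_dotProduct] at hw
  simp_rw [hres]
  simpa [dotProduct, mul_comm] using hw

theorem Finset.exists_shift_forall_sum_residual_mul_eq_zero {α β : Type*}
    (A : α → β → ℝ) (Ω : Finset (α × β)) :
    ∃ (r : α → ℝ) (c : β → ℝ), ∀ (s : α → ℝ) (t : β → ℝ),
      ∑ p ∈ Ω, (A p.1 p.2 - r p.1 - c p.2) * (s p.1 + t p.2) = 0 := by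
  let L : (α → ℝ) × (β → ℝ) →ₗ[ℝ] Ω → ℝ :=
    { toFun := fun rc p => rc.1 p.1.1 + rc.2 p.1.2
      map_add' := fun _ _ => by ext; simp only [Prod.fst_add, Prod.snd_add, Pi.add_apply]; ring
      map_smul' := fun _ _ => by ext; simp only [Prod.smul_fst, Prod.smul_snd, Pi.smul_apply,
        smul_eq_mul, RingHom.id_apply]; ring }
  obtain ⟨⟨r, c⟩, hrc⟩ := L.exists_forall_sum_sub_mul_eq_zero fun p => A p.1.1 p.1.2
  refine ⟨r, c, fun s t => ?_⟩
  rw [← Finset.sum_coe_sort, ← hrc (s, t)]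
  simp [L, sub_sub]

theorem cssm_exists_general {m n : ℕ}
    (A : Fin m → Fin n → ℝ) (Ω : Finset (Fin m × Fin n)) :
    ∃ (r : Fin m → ℝ) (c : Fin n → ℝ), IsCSSM A Ω r c := by
  obtain ⟨r, c, hrc⟩ := Ω.exists_shift_forall_sum_residual_mul_eq_zero A
  refine ⟨r, c, fun i _ => ?_, fun j _ => ?_⟩
  · rw [sum_filter]
    simpa only [Pi.zero_apply, add_zero, mul_ite, mul_one, mul_zero]
      using hrc (fun k => if k = i then 1 else 0) 0
  · rw [sum_filter]
    simpa only [Pi.zero_apply, zero_add, mul_ite, mul_one, mul_zero]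
      using hrc 0 (fun k => if k = j then 1 else 0)

/-- Existence of a canonical shifting solution (matrix case). -/
theorem cssm_exists {m n : ℕ} (hm : 0 < m) (hn : 0 < n)
    (A : Fin m → Fin n → ℝ) (Ω : Finset (Fin m × Fin n)) :
    ∃ (r : Fin m → ℝ) (c : Fin n → ℝ), IsCSSM A Ω r c :=
  cssm_exists_general A Ω
end

section
/- Existence of a canonical shifting solution (tensor case, k = d − 1): for every d ≥ 1, sizes n : Fin d → ℕ (all positive), tensor A : (∀ j : Fin d, Fin (n j)) → ℝ, and finite set Ω of known index vectors, there exists a canonical shifting solution S (for subtensor dimension k = d − 1) for (A, Ω). (For instance, any minimizer of the convex quadratic S ↦ ∑_{α ∈ Ω} (A(α) − ∑_{j : Fin d} S j (α j))² satisfies the defining zero-sum slice conditions.) -/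
open Finset

/-! Take `S` to be a least-squares fit of `A` on `Ω` by sums `∑ j, S j (α j)`, i.e. project `A`
orthogonally onto the range of this linear map. The residual `A'` is then orthogonal to every such
sum; testing against the indicator of the slice `α j = v` (the sum with `S = δ_(j,v)`) says exactly
that `A'` sums to zero over that slice. -/

theorem LinearMap.exists_dotProduct_sub_eq_zero {ι V : Type*} [Fintype ι] [AddCommGroup V]
    [Module ℝ V] (L : V →ₗ[ℝ] ι → ℝ) (b : ι → ℝ) :
    ∃ x, ∀ y, L y ⬝ᵥ (b - L x) = 0 := by
  let L' : V →ₗ[ℝ] EuclideanSpace ℝ ι :=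
    (WithLp.linearEquiv 2 ℝ (ι → ℝ)).symm.toLinearMap ∘ₗ L
  let K := LinearMap.range L'
  obtain ⟨x, hx⟩ : ∃ x, L' x = K.starProjection (WithLp.toLp 2 b) :=
    LinearMap.mem_range.mp (K.orthogonalProjectionOnto _).2
  refine ⟨x, fun y => ?_⟩
  have h := K.inner_right_of_mem_orthogonal (LinearMap.mem_range_self L' y)
    (K.sub_starProjection_mem_orthogonal (WithLp.toLp 2 b))
  rw [← hx, EuclideanSpace.inner_eq_star_dotProduct] at h
  simpa [L', dotProduct_comm] using h

theorem LinearMap.exists_sum_mul_sub_eq_zero {ι V : Type*} [AddCommGroup V] [Module ℝ V]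
    (s : Finset ι) (L : V →ₗ[ℝ] ι → ℝ) (b : ι → ℝ) :
    ∃ x, ∀ y, ∑ i ∈ s, L y i * (b i - L x i) = 0 := by
  obtain ⟨x, hx⟩ := (LinearMap.funLeft ℝ ℝ ((↑) : s → ι) ∘ₗ L).exists_dotProduct_sub_eq_zero
    (b ∘ (↑))
  refine ⟨x, fun y => ?_⟩
  rw [← Finset.sum_coe_sort s]
  exact hx y

def shiftLinearMap {ι : Type*} [Fintype ι] (X : ι → Type*) :
    (∀ j, X j → ℝ) →ₗ[ℝ] (∀ j, X j) → ℝ where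
  toFun S α := ∑ j, S j (α j)
  map_add' S T := by ext α; simp [Finset.sum_add_distrib]
  map_smul' c S := by ext α; simp [Finset.mul_sum]

theorem shiftLinearMap_single {ι : Type*} [Fintype ι] [DecidableEq ι] {X : ι → Type*}
    [∀ j, DecidableEq (X j)] (j : ι) (v : X j) (α : ∀ j, X j) :
    shiftLinearMap X (Pi.single j (Pi.single v 1)) α = if α j = v then 1 else 0 := by
  rw [shiftLinearMap, LinearMap.coe_mk, AddHom.coe_mk, Finset.sum_eq_single j
    (fun j' _ hj' => by rw [Pi.single_eq_of_ne hj', Pi.zero_apply]) (by simp),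
    Pi.single_eq_same, Pi.single_apply]

theorem css_exists_general {d : ℕ} {n : Fin d → ℕ}
    (A : (∀ j, Fin (n j)) → ℝ) (Ω : Finset (∀ j, Fin (n j))) :
    ∃ S : ∀ j, Fin (n j) → ℝ, IsCSS A Ω S := by
  obtain ⟨S, hS⟩ := (shiftLinearMap fun j => Fin (n j)).exists_sum_mul_sub_eq_zero Ω A
  refine ⟨S, fun j v _ => ?_⟩
  have hslice := hS (Pi.single j (Pi.single v 1))
  simp only [shiftLinearMap_single, boole_mul, ← Finset.sum_filter] at hslice
  exact hslice

/-- Existence of a canonical shifting solution (tensor case, `k = d - 1`). -/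
theorem css_exists {d : ℕ} (hd : 1 ≤ d) {n : Fin d → ℕ} (hn : ∀ j, 0 < n j)
    (A : (∀ j, Fin (n j)) → ℝ) (Ω : Finset (∀ j, Fin (n j))) :
    ∃ S : ∀ j, Fin (n j) → ℝ, IsCSS A Ω S :=
  css_exists_general A Ω
end
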